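/- arXiv:2601.17618 — 2 statements merged into one kernel-verified Lean document; each statement's English description precedes it below -/
import Mathlib

section
/- Let E be a random vector in ℝ^q with i.i.d. Rademacher coordinates (each ±1 with probability 1/2), and let g : ℝ^q → ℝ be three times continuously differentiable near θ. Then for the simultaneous-perturbation estimator H_δ = (g(θ + δE) − g(θ − δE)) / (2δ) · E⁻ᵀ, where E⁻¹ is the coordinatewise reciprocal of E, the expectation satisfies E[H_δ]ᵢ = ∂g/∂θᵢ (θ) + O(δ²) as δ → 0; in the special case where g is a quadratic polynomial, E[H_δ] equals ∇g(θ) exactly. -/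
open Filter Topology Matrix Finset Asymptotics

/-!
Averaging over all sign vectors `E`, the coordinates are orthogonal: `∑_E E_i E_j = 2^q δ_ij`.
Hence averaging `L E · E_i` recovers `L eᵢ` for every linear form `L`, and the error of the
estimator is the average of `(ratio_E(δ) − Dg(θ) E) · E_i`, where `ratio_E(δ)` is the symmetric
difference quotient of `g` along `E`. Taylor's theorem to third order along the line `t ↦ θ + tE`
makes this quotient `Dg(θ) E + O(δ²)`, because the even-order terms cancel. For a quadratic `g`
the line restriction is a quadratic polynomial in `t`, whose symmetric quotient is exactly its
derivative at `0`.
-/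

section SignVectors

variable {ι : Type*}

def signVec (b : ι → Bool) : ι → ℝ := fun i => if b i then 1 else -1

lemma signVec_mul_self (b : ι → Bool) (i : ι) : signVec b i * signVec b i = 1 := by
  unfold signVec; split_ifs <;> norm_num

variable [Fintype ι] [DecidableEq ι]

lemma sum_signVec_mul_signVec (i j : ι) :
    ∑ b : ι → Bool, signVec b i * signVec b j = if i = j then 2 ^ Fintype.card ι else 0 := by
  split_ifs with hij
  · simp [hij, signVec_mul_self]
  · have hflip : Function.Involutive fun b : ι → Bool => Function.update b i (!b i) := by
      intro b; simp
    have hanti : ∀ b : ι → Bool, signVec (Function.update b i (!b i)) i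
        * signVec (Function.update b i (!b i)) j = -(signVec b i * signVec b j) := by
      intro b
      simp only [signVec, Function.update_self, Function.update_of_ne (Ne.symm hij)]
      cases b i <;> cases b j <;> simp
    have hsum := Equiv.sum_comp (hflip.toPerm _) fun b => signVec b i * signVec b j
    simp only [Function.Involutive.coe_toPerm, hanti, Finset.sum_neg_distrib] at hsum
    linarith

lemma sum_map_signVec_mul_signVec {M : Type*} [FunLike M (ι → ℝ) ℝ]
    [LinearMapClass M ℝ (ι → ℝ) ℝ] (L : M) (i : ι) :
    ∑ b : ι → Bool, L (signVec b) * signVec b i = 2 ^ Fintype.card ι * L (Pi.single i 1) := by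
  have hL : ∀ v, L v = ∑ j, v j * L (Pi.single j 1) := fun v => by
    conv_lhs => rw [pi_eq_sum_univ' v]
    simp [map_sum]
  simp_rw [hL (signVec _), Finset.sum_mul]
  rw [Finset.sum_comm]
  simp_rw [mul_right_comm _ (L _), ← Finset.sum_mul, sum_signVec_mul_signVec]
  simp

end SignVectors

section SymmetricQuotient

variable {E : Type*} [NormedAddCommGroup E] [NormedSpace ℝ E]

lemma isBigO_sub_comp_neg_sub_deriv {F : Type*} [NormedAddCommGroup F] [NormedSpace ℝ F]
    {f : ℝ → F} {u : Set ℝ} (hu : u ∈ 𝓝 0) (hf : ContDiffOn ℝ 3 f u) :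
    (fun δ : ℝ => f δ - f (-δ) - (2 * δ) • deriv f 0) =O[𝓝 0] fun δ => δ ^ 3 := by
  obtain ⟨ε, hε, hball⟩ := Metric.mem_nhds_iff.mp hu
  set s := Metric.ball (0 : ℝ) ε
  have hs : s ∈ 𝓝 0 := Metric.ball_mem_nhds 0 hε
  have htaylor := taylor_isLittleO (convex_ball 0 ε) (Metric.mem_ball_self hε) (hf.mono hball)
  rw [nhdsWithin_eq_nhds.mpr hs] at htaylor
  simp only [sub_zero] at htaylor
  set T := taylorWithinEval f 3 s 0
  obtain ⟨c, hodd⟩ : ∃ c : F, ∀ δ, T δ - T (-δ) = (2 * δ) • deriv f 0 + δ ^ 3 • c := by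
    refine ⟨(3 : ℝ)⁻¹ • iteratedDerivWithin 3 f s 0, fun δ => ?_⟩
    simp only [T, taylor_within_apply, Finset.sum_range_succ, Finset.sum_range_zero,
      iteratedDerivWithin_one, derivWithin_of_mem_nhds hs, Nat.factorial, sub_zero]
    push_cast
    module
  have hrem : (fun δ : ℝ => f (-δ) - T (-δ)) =O[𝓝 0] fun δ => δ ^ 3 := by
    have hneg := (htaylor.comp_tendsto (continuous_neg.tendsto' (0 : ℝ) 0 neg_zero)).isBigO
    simpa [Function.comp_def, Odd.neg_pow (by decide : Odd 3)] using hneg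
  have hcubic : (fun δ : ℝ => δ ^ 3 • c) =O[𝓝 0] fun δ => δ ^ 3 := by
    simpa using (isBigO_refl (fun δ : ℝ => δ ^ 3) _).smul (isBigO_const_const c (one_ne_zero' ℝ) _)
  refine ((htaylor.isBigO.sub hrem).add hcubic).congr_left fun δ => ?_
  rw [sub_sub_sub_comm, hodd]
  abel

lemma isBigO_symmetric_quotient_sub_fderiv {g : E → ℝ} {θ : E} {s : Set E} (hs : s ∈ 𝓝 θ)
    (hg : ContDiffOn ℝ 3 g s) (v : E) :
    (fun δ : ℝ => (g (θ + δ • v) - g (θ - δ • v)) / (2 * δ) - fderiv ℝ g θ v)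
      =O[𝓝[≠] 0] fun δ => δ ^ 2 := by
  have hline : ContDiff ℝ 3 fun t : ℝ => θ + t • v := by fun_prop
  have hpre : (fun t : ℝ => θ + t • v) ⁻¹' s ∈ 𝓝 0 :=
    hline.continuous.continuousAt.preimage_mem_nhds (by simpa using hs)
  have hderiv : deriv (fun t : ℝ => g (θ + t • v)) 0 = fderiv ℝ g θ v :=
    ((hg.contDiffAt hs).differentiableAt (by norm_num)).lineDeriv_eq_fderiv
  have hcubic := (isBigO_sub_comp_neg_sub_deriv hpre
    (hg.comp hline.contDiffOn (Set.mapsTo_preimage _ _))).mono (nhdsWithin_le_nhds (s := {0}ᶜ))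
  refine ((hcubic.mul (isBigO_refl (fun δ : ℝ => (2 * δ)⁻¹) _)).congr' ?_ ?_).trans
    (isBigO_const_mul_self 2⁻¹ _ _)
  · filter_upwards [self_mem_nhdsWithin] with δ (hδ : δ ≠ 0)
    simp only [Function.comp_def, hderiv, neg_smul, ← sub_eq_add_neg, smul_eq_mul]
    field_simp
  · filter_upwards [self_mem_nhdsWithin] with δ (hδ : δ ≠ 0)
    field_simp

lemma symmetric_quotient_eq_fderiv_of_quadratic_along {g : E → ℝ} {θ v : E}
    (hg : DifferentiableAt ℝ g θ) {a b c : ℝ}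
    (hquad : ∀ t : ℝ, g (θ + t • v) = a + b * t + c * t ^ 2)
    {δ : ℝ} (hδ : δ ≠ 0) :
    (g (θ + δ • v) - g (θ - δ • v)) / (2 * δ) = fderiv ℝ g θ v := by
  have hline : HasLineDerivAt ℝ g b θ v := by
    have hpoly := ((hasDerivAt_id' (0 : ℝ)).const_mul b).const_add a |>.fun_add
      ((hasDerivAt_pow 2 (0 : ℝ)).const_mul c)
    simpa [HasLineDerivAt, hquad] using hpoly
  rw [(hg.hasFDerivAt.hasLineDerivAt v).unique hline, sub_eq_add_neg θ, ← neg_smul, hquad, hquad]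
  field_simp
  ring

end SymmetricQuotient

lemma quadratic_apply_add_smul {ι : Type*} [Fintype ι] (A : Matrix ι ι ℝ) (bv θ v : ι → ℝ)
    (c t : ℝ) :
    (θ + t • v) ⬝ᵥ A *ᵥ (θ + t • v) + bv ⬝ᵥ (θ + t • v) + c
      = (θ ⬝ᵥ A *ᵥ θ + bv ⬝ᵥ θ + c) + (θ ᵥ* A + A *ᵥ θ + bv) ⬝ᵥ v * t + v ⬝ᵥ A *ᵥ v * t ^ 2 := by
  simp only [mulVec_add, mulVec_smul, dotProduct_add, add_dotProduct, dotProduct_smul,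
    smul_dotProduct, smul_eq_mul, ← dotProduct_mulVec, dotProduct_comm (A *ᵥ θ) v]
  ring

section SPSA

variable {ι : Type*} [Fintype ι] [DecidableEq ι]

/-- The expectation `E[H_δ]ᵢ` of the simultaneous-perturbation estimator, as the uniform average
over all sign vectors; the factor `E⁻¹ᵢ` is written `Eᵢ` since the entries are `±1`. -/
noncomputable def spsaMean (g : (ι → ℝ) → ℝ) (θ : ι → ℝ) (δ : ℝ) (i : ι) : ℝ :=
  (1 / 2 ^ Fintype.card ι) * ∑ b : ι → Bool,
    (g (θ + δ • signVec b) - g (θ - δ • signVec b)) / (2 * δ) * signVec b i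

lemma spsaMean_sub_map_single (g : (ι → ℝ) → ℝ) (θ : ι → ℝ) (δ : ℝ) (i : ι)
    {M : Type*} [FunLike M (ι → ℝ) ℝ] [LinearMapClass M ℝ (ι → ℝ) ℝ] (L : M) :
    spsaMean g θ δ i - L (Pi.single i 1) =
      (1 / 2 ^ Fintype.card ι) * ∑ b : ι → Bool,
        ((g (θ + δ • signVec b) - g (θ - δ • signVec b)) / (2 * δ) - L (signVec b))
          * signVec b i := by
  have hL : L (Pi.single i 1) = (1 / 2 ^ Fintype.card ι) * ∑ b : ι → Bool,
      L (signVec b) * signVec b i := by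
    rw [sum_map_signVec_mul_signVec]; field_simp
  simp only [spsaMean, hL, ← mul_sub, ← Finset.sum_sub_distrib, sub_mul]

lemma isBigO_spsaMean_sub_fderiv {g : (ι → ℝ) → ℝ} {θ : ι → ℝ} {s : Set (ι → ℝ)}
    (hs : s ∈ 𝓝 θ) (hg : ContDiffOn ℝ 3 g s) (i : ι) :
    (fun δ => spsaMean g θ δ i - fderiv ℝ g θ (Pi.single i 1)) =O[𝓝[≠] 0] fun δ => δ ^ 2 := by
  simp only [spsaMean_sub_map_single g θ _ i (fderiv ℝ g θ)]
  refine .const_mul_left (.fun_sum fun b _ => ?_) _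
  simpa using (isBigO_symmetric_quotient_sub_fderiv hs hg (signVec b)).mul
    (isBigO_const_const (signVec b i) (one_ne_zero' ℝ) _)

lemma spsaMean_eq_fderiv_of_quadratic (A : Matrix ι ι ℝ) (bv : ι → ℝ) (c : ℝ) (θ : ι → ℝ)
    {δ : ℝ} (hδ : δ ≠ 0) (i : ι) :
    spsaMean (fun x => x ⬝ᵥ A *ᵥ x + bv ⬝ᵥ x + c) θ δ i
      = fderiv ℝ (fun x => x ⬝ᵥ A *ᵥ x + bv ⬝ᵥ x + c) θ (Pi.single i 1) := by
  have hdiff : Differentiable ℝ fun x : ι → ℝ => x ⬝ᵥ A *ᵥ x + bv ⬝ᵥ x + c := by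
    simp only [dotProduct, mulVec]
    fun_prop
  have hexact := fun v => symmetric_quotient_eq_fderiv_of_quadratic_along (hdiff θ)
    (quadratic_apply_add_smul A bv θ v c) hδ
  rw [← sub_eq_zero, spsaMean_sub_map_single _ _ _ _ (fderiv ℝ _ θ)]
  simp only [hexact, sub_self, zero_mul, Finset.sum_const_zero, mul_zero]

end SPSA

theorem stmt_13_general {q : ℕ} (g : (Fin q → ℝ) → ℝ) (θ : Fin q → ℝ)
    (s : Set (Fin q → ℝ)) (hs : s ∈ 𝓝 θ) (hg : ContDiffOn ℝ 3 g s)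
    (e : (Fin q → Bool) → Fin q → ℝ)
    (he : e = fun b i => if b i then (1 : ℝ) else -1)
    (avg : ℝ → Fin q → ℝ)
    (havg : avg = fun δ i => (1 / 2 ^ q) *
      ∑ b : Fin q → Bool, (g (θ + δ • e b) - g (θ - δ • e b)) / (2 * δ) * e b i) :
    (∀ i, ∃ C > (0 : ℝ), ∀ᶠ δ in 𝓝[>] (0 : ℝ),
        |avg δ i - fderiv ℝ g θ (Pi.single i 1)| ≤ C * δ ^ 2) ∧
      (∀ (A : Matrix (Fin q) (Fin q) ℝ) (bv : Fin q → ℝ) (c : ℝ),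
        (g = fun x => dotProduct x (A.mulVec x) + dotProduct bv x + c) →
        ∀ δ > (0 : ℝ), ∀ i, avg δ i = fderiv ℝ g θ (Pi.single i 1)) := by
  have hmean : avg = spsaMean g θ := by
    subst he havg
    ext δ i
    simp only [spsaMean, Fintype.card_fin]
    rfl
  subst hmean
  refine ⟨fun i => ?_, fun A bv c hquad δ hδ i => ?_⟩
  · obtain ⟨C, hC, hbound⟩ := (isBigO_spsaMean_sub_fderiv hs hg i).exists_pos
    refine ⟨C, hC, ?_⟩
    filter_upwards [hbound.bound.filter_mono (nhdsWithin_mono 0 fun x (hx : 0 < x) => hx.ne')]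
      with δ hδ
    simpa using hδ
  · subst hquad
    exact spsaMean_eq_fderiv_of_quadratic A bv c θ hδ.ne' i

/-- Lemma 1 of Spall, 1992: for the simultaneous-perturbation estimator
`H_δ = (g(θ + δE) − g(θ − δE))/(2δ) · E⁻ᵀ` with `E` a vector of i.i.d. Rademacher signs
(so `E⁻¹ = E` coordinatewise and the expectation is the uniform average over all `2^q` sign
vectors), if `g` is three times continuously differentiable near `θ` then
`E[H_δ]ᵢ = ∂g/∂θᵢ(θ) + O(δ²)` as `δ → 0⁺`; and if `g` is a quadratic polynomial then
`E[H_δ] = ∇g(θ)` exactly for every `δ > 0`. -/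
theorem stmt_13 {q : ℕ} (hq : 0 < q) (g : (Fin q → ℝ) → ℝ) (θ : Fin q → ℝ)
    (s : Set (Fin q → ℝ)) (hs : s ∈ 𝓝 θ) (hg : ContDiffOn ℝ 3 g s)
    (e : (Fin q → Bool) → Fin q → ℝ)
    (he : e = fun b i => if b i then (1 : ℝ) else -1)
    (avg : ℝ → Fin q → ℝ)
    (havg : avg = fun δ i => (1 / 2 ^ q) *
      ∑ b : Fin q → Bool, (g (θ + δ • e b) - g (θ - δ • e b)) / (2 * δ) * e b i) :
    (∀ i, ∃ C > (0 : ℝ), ∀ᶠ δ in 𝓝[>] (0 : ℝ),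
        |avg δ i - fderiv ℝ g θ (Pi.single i 1)| ≤ C * δ ^ 2) ∧
      (∀ (A : Matrix (Fin q) (Fin q) ℝ) (bv : Fin q → ℝ) (c : ℝ),
        (g = fun x => dotProduct x (A.mulVec x) + dotProduct bv x + c) →
        ∀ δ > (0 : ℝ), ∀ i, avg δ i = fderiv ℝ g θ (Pi.single i 1)) :=
  stmt_13_general g θ s hs hg e he avg havg
end

section
/- One-dimensional Robbins–Monro convergence in mean square: let h : ℝ → ℝ satisfy (x − x*)·(h(x) − y) ≥ μ(x − x*)² for all x, for some μ > 0, and |h(x) − y| ≤ L|x − x*|. Let φ_k = φ_{k−1} − γ_k (h(φ_{k−1}) − y + ξ_k) where ξ_k are independent mean-zero noises with Var(ξ_k) ≤ σ², and γ_k = a k^{−b}, b ∈ (1/2, 1], with 2aμ > 0. Then E[(φ_k − x*)²] → 0 as k → ∞, where x* is the unique solution of h(x) = y. -/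
open MeasureTheory ProbabilityTheory Filter Topology Finset

/-! Along the iteration the mean-square error `u k = E[(φ_k − x*)²]` obeys
`u_k ≤ (1 − 2μγ_k + L²γ_k²) u_{k−1} + σ²γ_k²`: the drift is a strict contraction of the
error by strong monotonicity, and the noise, being independent of `φ_{k−1}` and centred,
only adds its variance. Since `γ_k → 0`, eventually `u_k ≤ (1 − μγ_k) u_{k−1} + σ²γ_k²`
with `σ²γ_k² = o(γ_k)`, and `Σ γ_k = ∞` (as `b ≤ 1`) forces `u_k → 0` (Chung's lemma). -/

theorem tendsto_zero_of_eventually_le_one_sub_mul {v c : ℕ → ℝ} (hv : ∀ k, 0 ≤ v k)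
    (hc : Tendsto (fun n => ∑ k ∈ range n, c k) atTop atTop)
    (hrec : ∀ᶠ k in atTop, v (k + 1) ≤ (1 - c k) * v k) :
    Tendsto v atTop (𝓝 0) := by
  obtain ⟨K, hK⟩ := eventually_atTop.1 hrec
  set S : ℕ → ℝ := fun n => ∑ k ∈ range n, c k
  have bound : ∀ n ≥ K, v n ≤ v K * Real.exp (-(S n - S K)) := by
    intro n hn
    induction n, hn using Nat.le_induction with
    | base => simp
    | succ n hn ih =>
      calc v (n + 1) ≤ (1 - c n) * v n := hK n hn
        _ ≤ Real.exp (-c n) * v n := by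
          gcongr
          · exact hv n
          · linarith [Real.add_one_le_exp (-c n)]
        _ ≤ Real.exp (-c n) * (v K * Real.exp (-(S n - S K))) := by gcongr
        _ = v K * Real.exp (-(S (n + 1) - S K)) := by
          simp only [S, sum_range_succ]
          rw [mul_left_comm, ← Real.exp_add]
          ring_nf
  have hlim : Tendsto (fun n => v K * Real.exp (-(S n - S K))) atTop (𝓝 0) := by
    have hS : Tendsto (fun n => S n - S K) atTop atTop := by
      simpa only [sub_eq_add_neg] using tendsto_atTop_add_const_right _ (-S K) hc
    simpa using (Real.tendsto_exp_atBot.comp (tendsto_neg_atTop_atBot.comp hS)).const_mul (v K)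
  exact squeeze_zero' (.of_forall hv) (eventually_atTop.2 ⟨K, bound⟩) hlim

theorem tendsto_zero_of_eventually_le_one_sub_mul_add {u c d : ℕ → ℝ} (hu : ∀ k, 0 ≤ u k)
    (hc1 : ∀ᶠ k in atTop, c k ≤ 1)
    (hc : Tendsto (fun n => ∑ k ∈ range n, c k) atTop atTop)
    (hd : ∀ ε > 0, ∀ᶠ k in atTop, d k ≤ ε * c k)
    (hrec : ∀ᶠ k in atTop, u (k + 1) ≤ (1 - c k) * u k + d k) :
    Tendsto u atTop (𝓝 0) := by
  refine tendsto_order.2 ⟨fun a ha => .of_forall fun k => ha.trans_le (hu k), fun ε hε => ?_⟩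
  -- `w = (u − ε/2)⁺` contracts without error term, since `d ≤ (ε/2) c` eventually.
  set w : ℕ → ℝ := fun k => max (u k - ε / 2) 0
  have hw : Tendsto w atTop (𝓝 0) := by
    refine tendsto_zero_of_eventually_le_one_sub_mul (fun k => le_max_right _ _) hc ?_
    filter_upwards [hrec, hc1, hd (ε / 2) (half_pos hε)] with k hrec hc1 hd
    have hcontr : u (k + 1) - ε / 2 ≤ (1 - c k) * (u k - ε / 2) := by linarith
    have hc0 : 0 ≤ 1 - c k := sub_nonneg.2 hc1
    exact max_le (hcontr.trans (mul_le_mul_of_nonneg_left (le_max_left _ _) hc0))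
      (mul_nonneg hc0 (le_max_right _ _))
  filter_upwards [hw.eventually_lt_const (half_pos hε)] with k hk
  linarith [le_max_left (u k - ε / 2) 0]

theorem tendsto_zero_of_le_contraction_add_sq {u γ : ℕ → ℝ} {μ L σ2 : ℝ} (hu : ∀ k, 0 ≤ u k)
    (hμ : 0 < μ) (hγ : ∀ k, 0 ≤ γ k) (hγlim : Tendsto γ atTop (𝓝 0))
    (hγsum : Tendsto (fun n => ∑ k ∈ range n, γ k) atTop atTop)
    (hrec : ∀ k, u (k + 1) ≤ (1 - 2 * μ * γ k + L ^ 2 * γ k ^ 2) * u k + σ2 * γ k ^ 2) :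
    Tendsto u atTop (𝓝 0) := by
  have hlim : ∀ r : ℝ, Tendsto (fun k => r * γ k) atTop (𝓝 0) := fun r => by
    simpa using hγlim.const_mul r
  refine tendsto_zero_of_eventually_le_one_sub_mul_add (c := fun k => μ * γ k)
    (d := fun k => σ2 * γ k ^ 2) hu ((hlim μ).eventually_le_const one_pos) ?_ ?_ ?_
  · simpa only [← mul_sum] using hγsum.const_mul_atTop hμ
  · intro ε hε
    filter_upwards [(hlim σ2).eventually_le_const (mul_pos hε hμ)] with k hk
    calc σ2 * γ k ^ 2 = σ2 * γ k * γ k := by ring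
      _ ≤ ε * μ * γ k := mul_le_mul_of_nonneg_right hk (hγ k)
      _ = ε * (μ * γ k) := by ring
  · filter_upwards [(hlim (L ^ 2)).eventually_le_const hμ] with k hk
    have := mul_nonneg (sub_nonneg.2 hk) (mul_nonneg (hγ k) (hu k))
    linarith [hrec k]

theorem tendsto_mul_natCast_succ_rpow_neg {a b : ℝ} (hb : 0 < b) :
    Tendsto (fun k : ℕ => a * ((k + 1 : ℕ) : ℝ) ^ (-b)) atTop (𝓝 0) := by
  simpa using ((tendsto_rpow_neg_atTop hb).comp
    (tendsto_natCast_atTop_atTop.comp (tendsto_add_atTop_nat 1))).const_mul a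

theorem tendsto_sum_mul_natCast_succ_rpow_neg {a b : ℝ} (ha : 0 < a) (hb : b ≤ 1) :
    Tendsto (fun n => ∑ k ∈ range n, a * ((k + 1 : ℕ) : ℝ) ^ (-b)) atTop atTop := by
  refine tendsto_atTop_mono (fun n => ?_)
    (Real.tendsto_sum_range_one_div_nat_succ_atTop.const_mul_atTop ha)
  rw [mul_sum]
  refine sum_le_sum fun k _ => mul_le_mul_of_nonneg_left ?_ ha.le
  have hk : (1 : ℝ) ≤ ((k + 1 : ℕ) : ℝ) := by norm_cast; omega
  calc 1 / ((k : ℝ) + 1) = ((k + 1 : ℕ) : ℝ) ^ (-1 : ℝ) := by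
        push_cast; rw [Real.rpow_neg_one, one_div]
    _ ≤ ((k + 1 : ℕ) : ℝ) ^ (-b) := Real.rpow_le_rpow_of_exponent_le hk (by linarith)

theorem sq_sub_mul_sub_le {h : ℝ → ℝ} {y xs μ L g x : ℝ} (hg : 0 ≤ g)
    (hmono : μ * (x - xs) ^ 2 ≤ (x - xs) * (h x - y)) (hLip : |h x - y| ≤ L * |x - xs|) :
    (x - xs - g * (h x - y)) ^ 2 ≤ (1 - 2 * μ * g + L ^ 2 * g ^ 2) * (x - xs) ^ 2 := by
  have hsq : (h x - y) ^ 2 ≤ L ^ 2 * (x - xs) ^ 2 := by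
    simpa only [sq_abs, mul_pow] using pow_le_pow_left₀ (abs_nonneg _) hLip 2
  nlinarith [mul_le_mul_of_nonneg_left hmono hg, mul_le_mul_of_nonneg_left hsq (sq_nonneg g)]

section

variable {Ω : Type*} [MeasurableSpace Ω] {P : Measure Ω}

theorem MeasureTheory.MemLp.comp_sub_of_abs_sub_le [IsFiniteMeasure P] {p : ENNReal} {h : ℝ → ℝ} (hmeas : Measurable h) {y xs L : ℝ}
    (hLip : ∀ x, |h x - y| ≤ L * |x - xs|) {X : Ω → ℝ} (hX : MemLp X p P) :
    MemLp (fun ω => h (X ω) - y) p P :=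
  (hX.sub (memLp_const xs)).of_le_mul
    ((hmeas.sub measurable_const).comp_aemeasurable
      hX.aestronglyMeasurable.aemeasurable).aestronglyMeasurable
    (.of_forall fun ω => by simpa only [Real.norm_eq_abs, Pi.sub_apply] using hLip (X ω))

theorem ProbabilityTheory.IndepFun.integral_sub_mul_sq {F Z : Ω → ℝ} (hF : MemLp F 2 P) (hZ : MemLp Z 2 P) (hind : IndepFun F Z P)
    (hZmean : ∫ ω, Z ω ∂P = 0) (g : ℝ) :
    ∫ ω, (F ω - g * Z ω) ^ 2 ∂P = ∫ ω, F ω ^ 2 ∂P + g ^ 2 * ∫ ω, Z ω ^ 2 ∂P := by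
  have hFZ : ∫ ω, F ω * Z ω ∂P = 0 := by
    rw [hind.integral_fun_mul_eq_mul_integral hF.aestronglyMeasurable hZ.aestronglyMeasurable,
      hZmean, mul_zero]
  have hexp : (fun ω => (F ω - g * Z ω) ^ 2)
      = fun ω => F ω ^ 2 - 2 * g * (F ω * Z ω) + g ^ 2 * Z ω ^ 2 := by
    funext ω; ring
  rw [hexp, integral_add, integral_sub, integral_const_mul, integral_const_mul, hFZ]
  · ring
  all_goals first
    | exact hF.integrable_sq
    | exact hZ.integrable_sq.const_mul _
    | exact (hF.integrable_mul hZ).const_mul _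
    | exact hF.integrable_sq.sub ((hF.integrable_mul hZ).const_mul _)

theorem integral_sq_step_le [IsFiniteMeasure P] {h : ℝ → ℝ} (hmeas : Measurable h) {y xs μ L σ2 g : ℝ} (hg : 0 ≤ g)
    (hmono : ∀ x, μ * (x - xs) ^ 2 ≤ (x - xs) * (h x - y))
    (hLip : ∀ x, |h x - y| ≤ L * |x - xs|) {X Z : Ω → ℝ} (hX : MemLp X 2 P)
    (hZ : MemLp Z 2 P) (hZmean : ∫ ω, Z ω ∂P = 0) (hZvar : ∫ ω, Z ω ^ 2 ∂P ≤ σ2)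
    (hind : IndepFun X Z P) :
    ∫ ω, (X ω - g * (h (X ω) - y + Z ω) - xs) ^ 2 ∂P
      ≤ (1 - 2 * μ * g + L ^ 2 * g ^ 2) * ∫ ω, (X ω - xs) ^ 2 ∂P + σ2 * g ^ 2 := by
  set T : ℝ → ℝ := fun x => x - xs - g * (h x - y)
  have hT : Measurable T :=
    (measurable_id.sub measurable_const).sub ((hmeas.sub measurable_const).const_mul g)
  have hTX : MemLp (fun ω => T (X ω)) 2 P :=
    (hX.sub (memLp_const xs)).sub ((hX.comp_sub_of_abs_sub_le hmeas hLip).const_mul g)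
  have hsplit : ∫ ω, (X ω - g * (h (X ω) - y + Z ω) - xs) ^ 2 ∂P
      = ∫ ω, T (X ω) ^ 2 ∂P + g ^ 2 * ∫ ω, Z ω ^ 2 ∂P := by
    rw [← IndepFun.integral_sub_mul_sq hTX hZ (hind.comp hT measurable_id) hZmean g]
    congr 1; funext ω; ring
  have hdrift : ∫ ω, T (X ω) ^ 2 ∂P
      ≤ (1 - 2 * μ * g + L ^ 2 * g ^ 2) * ∫ ω, (X ω - xs) ^ 2 ∂P := by
    rw [← integral_const_mul]
    exact integral_mono hTX.integrable_sq ((hX.sub (memLp_const xs)).integrable_sq.const_mul _)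
      fun ω => sq_sub_mul_sub_le hg (hmono (X ω)) (hLip (X ω))
  rw [hsplit]
  nlinarith [mul_le_mul_of_nonneg_left hZvar (sq_nonneg g)]

end

theorem stmt_16_general {Ω : Type*} [MeasureSpace Ω] [IsProbabilityMeasure (ℙ : Measure Ω)]
    (h : ℝ → ℝ) (hmeas : Measurable h) (y xs μc L σ2 a b : ℝ)
    (hμ : 0 < μc) (ha : 0 < a) (hb1 : 1 / 2 < b) (hb2 : b ≤ 1)
    (hmono : ∀ x, μc * (x - xs) ^ 2 ≤ (x - xs) * (h x - y))
    (hLip : ∀ x, |h x - y| ≤ L * |x - xs|)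
    (γ : ℕ → ℝ) (hγ : γ = fun k : ℕ => a * (k : ℝ) ^ (-b))
    (ξ : ℕ → Ω → ℝ)
    (hξ2 : ∀ k, MemLp (ξ k) 2 ℙ)
    (hξmean : ∀ k, ∫ ω, ξ k ω = 0)
    (hξvar : ∀ k, ∫ ω, (ξ k ω) ^ 2 ≤ σ2)
    (φ : ℕ → Ω → ℝ) (φ₀ : ℝ) (hφ0 : φ 0 = fun _ => φ₀)
    (hξindep : ∀ k, IndepFun (φ k) (ξ (k + 1)) ℙ)
    (hrec : ∀ k, φ (k + 1) = fun ω =>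
      φ k ω - γ (k + 1) * (h (φ k ω) - y + ξ (k + 1) ω)) :
    Tendsto (fun k => ∫ ω, (φ k ω - xs) ^ 2) atTop (𝓝 0) := by
  have hφ2 : ∀ k, MemLp (φ k) 2 ℙ := by
    intro k
    induction k with
    | zero => rw [hφ0]; exact memLp_const φ₀
    | succ k ih =>
      rw [hrec k]
      exact ih.sub (((ih.comp_sub_of_abs_sub_le hmeas hLip).add (hξ2 _)).const_mul _)
  subst hγ
  refine tendsto_zero_of_le_contraction_add_sq (L := L) (σ2 := σ2)
    (fun k => integral_nonneg fun ω => sq_nonneg _) hμ (fun k => by positivity) (tendsto_mul_natCast_succ_rpow_neg (by linarith))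
    (tendsto_sum_mul_natCast_succ_rpow_neg ha hb2) fun k => ?_
  rw [hrec k]
  exact integral_sq_step_le hmeas (by positivity) hmono hLip (hφ2 k) (hξ2 _) (hξmean _)
    (hξvar _) (hξindep k)

/-- one-dimensional Robbins–Monro convergence in mean square.  Under strong
monotonicity `(x − x*)(h(x) − y) ≥ μ(x − x*)²` and linear growth `|h(x) − y| ≤ L|x − x*|`,
with independent mean-zero noises of variance ≤ σ² and step sizes `γ_k = a k^{−b}`,
`b ∈ (1/2, 1]`, the iterates `φ_k = φ_{k−1} − γ_k (h(φ_{k−1}) − y + ξ_k)` satisfy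
`E[(φ_k − x*)²] → 0`. -/
theorem stmt_16 {Ω : Type*} [MeasureSpace Ω] [IsProbabilityMeasure (ℙ : Measure Ω)]
    (h : ℝ → ℝ) (hmeas : Measurable h) (y xs μc L σ2 a b : ℝ)
    (hμ : 0 < μc) (hσ : 0 ≤ σ2) (ha : 0 < a) (hb1 : 1 / 2 < b) (hb2 : b ≤ 1)
    (hmono : ∀ x, μc * (x - xs) ^ 2 ≤ (x - xs) * (h x - y))
    (hLip : ∀ x, |h x - y| ≤ L * |x - xs|)
    (γ : ℕ → ℝ) (hγ : γ = fun k : ℕ => a * (k : ℝ) ^ (-b))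
    (ξ : ℕ → Ω → ℝ)
    (hξ2 : ∀ k, MemLp (ξ k) 2 ℙ)
    (hξmean : ∀ k, ∫ ω, ξ k ω = 0)
    (hξvar : ∀ k, ∫ ω, (ξ k ω) ^ 2 ≤ σ2)
    (φ : ℕ → Ω → ℝ) (φ₀ : ℝ) (hφ0 : φ 0 = fun _ => φ₀)
    (hξindep : ∀ k, IndepFun (φ k) (ξ (k + 1)) ℙ)
    (hrec : ∀ k, φ (k + 1) = fun ω =>
      φ k ω - γ (k + 1) * (h (φ k ω) - y + ξ (k + 1) ω)) :
    Tendsto (fun k => ∫ ω, (φ k ω - xs) ^ 2) atTop (𝓝 0) :=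
  stmt_16_general h hmeas y xs μc L σ2 a b hμ ha hb1 hb2 hmono hLip γ hγ ξ hξ2 hξmean hξvar φ φ₀ hφ0
    hξindep hrec
end
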